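/- Let f : ℂ → ℝ be C² and G_k the cumulant polynomial built from f. For k ≥ 3, z_0 ∈ ℂ and m, l ∈ {1,2}, the full second-derivative sum Σ_{1 ≤ r_1, r_2 ≤ k} (∂_{r_1 m}∂_{r_2 l} G_k)(z_0,…,z_0) = 0. -/

import Mathlib

open scoped BigOperators

/-- The cumulant polynomial
`G_k(z_1,…,z_k) = Σ_{j=1}^k ((-1)^{j-1}/j) Σ_{k_1+⋯+k_j=k, k_i≥1}
  (k!/(k_1!⋯k_j!)) Π_{l=1}^j f(z_l)^{k_l}`,
realized as a sum over `Composition k` (with `c.length` playing the role of `j`). -/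
noncomputable def cumulantG (f : ℂ → ℝ) (k : ℕ) (z : Fin k → ℂ) : ℝ :=
  ∑ c : Composition k,
    ((-1 : ℝ) ^ (c.length - 1) / (c.length : ℝ)) *
      ((Nat.factorial k : ℝ) /
        ∏ i : Fin c.length, (Nat.factorial (c.blocksFun i) : ℝ)) *
      ∏ i : Fin c.length, f (z (Fin.castLE c.length_le i)) ^ (c.blocksFun i)

/-- The unit vector of `ℂ^k ≅ (ℝ²)^k` pointing in the `j`-th real coordinate direction
(`j = 0`: real part, `j = 1`: imaginary part) of the `r`-th variable.  Differentiating
along `coordDir k r j` is the partial derivative `∂_{r j}` with respect to the `j`-th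
real coordinate of the `r`-th complex variable. -/
noncomputable def coordDir (k : ℕ) (r : Fin k) (j : Fin 2) : Fin k → ℂ :=
  Pi.single r (if j = 0 then (1 : ℂ) else Complex.I)

/-!
On the diagonal, `G_k (z, …, z) = k! f(z)^k Σ_c (-1)^(|c|-1)/|c| Π_i 1/c_i!`, and the sum over
compositions `c` of `k` is the `k`-th Taylor coefficient of `log ∘ exp = id`, computed by composing
the two power series along compositions; it vanishes for `k ≥ 2`. So `G_k` vanishes on the
diagonal line, and hence so does its second derivative in diagonal directions. Summing
`∂_{r₁ m} ∂_{r₂ l}` over all `r₁, r₂` gives exactly the second derivative in two diagonal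
directions `(e, …, e)`, `e ∈ {1, i}`.
-/

open FormalMultilinearSeries in
theorem sum_composition_log_exp_coeff_eq_zero {n : ℕ} (hn : 2 ≤ n) :
    ∑ c : Composition n, (-(-1 : ℝ) ^ c.length / c.length) *
      ∏ i, ((c.blocksFun i).factorial : ℝ)⁻¹ = 0 := by
  have hcomp : HasFPowerSeriesAt (Real.log ∘ NormedSpace.exp)
      ((ofScalars ℝ fun n ↦ -(-1 : ℝ) ^ n / n).comp (NormedSpace.expSeries ℝ ℝ)) 0 :=
    HasFPowerSeriesAt.comp (by rw [NormedSpace.exp_zero]; exact hasFPowerSeriesAt_log_one)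
      NormedSpace.exp_hasFPowerSeriesAt_zero
  have hid : Real.log ∘ NormedSpace.exp = ContinuousLinearMap.id ℝ ℝ := by
    ext x; simp [← Real.exp_eq_exp_ℝ]
  rw [hid] at hcomp
  have := congrArg (fun p : FormalMultilinearSeries ℝ ℝ ℝ ↦ p n fun _ ↦ 1)
    (hcomp.eq_formalMultilinearSeries ((ContinuousLinearMap.id ℝ ℝ).hasFPowerSeriesAt 0))
  have hexp (b : ℕ) : (NormedSpace.expSeries ℝ ℝ).coeff b = (b.factorial : ℝ)⁻¹ := by
    simpa using NormedSpace.expSeries_apply_eq (𝕂 := ℝ) (1 : ℝ) b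
  obtain ⟨m, rfl⟩ := Nat.exists_eq_add_of_le' hn
  simpa [FormalMultilinearSeries.comp, compAlongComposition_apply, applyComposition,
    ofScalars_apply_eq, hexp, mul_comm] using this

theorem cumulantG_const_eq_zero (f : ℂ → ℝ) {k : ℕ} (hk : 2 ≤ k) (w : ℂ) :
    cumulantG f k (fun _ ↦ w) = 0 := by
  have hterm (c : Composition k) :
      (-1 : ℝ) ^ (c.length - 1) / c.length *
          ((k.factorial : ℝ) / ∏ i, ((c.blocksFun i).factorial : ℝ)) *
          ∏ i, f w ^ c.blocksFun i =
        k.factorial * f w ^ k *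
          ((-(-1 : ℝ) ^ c.length / c.length) * ∏ i, ((c.blocksFun i).factorial : ℝ)⁻¹) := by
    have hsign : (-1 : ℝ) ^ (c.length - 1) = -(-1) ^ c.length := by
      obtain ⟨j, hj⟩ := Nat.exists_eq_add_of_lt (c.length_pos_iff.2 (by omega))
      rw [hj, zero_add, Nat.add_sub_cancel, pow_succ]
      ring
    rw [Finset.prod_pow_eq_pow_sum, c.sum_blocksFun, Finset.prod_inv_distrib, hsign]
    ring
  simp only [cumulantG, hterm, ← Finset.mul_sum, sum_composition_log_exp_coeff_eq_zero hk,
    mul_zero]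

theorem contDiff_cumulantG {f : ℂ → ℝ} {n : WithTop ℕ∞} (hf : ContDiff ℝ n f) (k : ℕ) :
    ContDiff ℝ n (cumulantG f k) := by
  unfold cumulantG
  fun_prop

theorem sum_coordDir (k : ℕ) (j : Fin 2) :
    ∑ r, coordDir k r j = fun _ ↦ if j = 0 then 1 else Complex.I :=
  Finset.univ_sum_single _

section SecondDerivative

variable {𝕜 E F G : Type*} [NontriviallyNormedField 𝕜] [NormedAddCommGroup E] [NormedSpace 𝕜 E]
  [NormedAddCommGroup F] [NormedSpace 𝕜 F] [NormedAddCommGroup G] [NormedSpace 𝕜 G]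

theorem fderiv_clm_apply_const {c : E → F →L[𝕜] G} {x : E} (hc : DifferentiableAt 𝕜 c x)
    (w : F) (v : E) : fderiv 𝕜 (fun z ↦ c z w) x v = fderiv 𝕜 c x v w := by
  simp [fderiv_clm_apply hc (differentiableAt_const w)]

theorem fderiv_apply_eq_zero_of_comp_eq_const {g : F → G} {L : E →L[𝕜] F} {c : G}
    (hg : Differentiable 𝕜 g) (hgL : ∀ x, g (L x) = c) (x a : E) :
    fderiv 𝕜 g (L x) (L a) = 0 := by
  have hconst : g ∘ L = fun _ ↦ c := funext hgL
  have := fderiv_comp x (hg (L x)) L.differentiableAt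
  rw [hconst, fderiv_const_apply, L.fderiv] at this
  simpa using (congrArg (· a) this).symm

theorem fderiv_fderiv_apply_eq_zero_of_comp_eq_const {g : F → G} {L : E →L[𝕜] F} {c : G}
    (hg : ContDiff 𝕜 2 g) (hgL : ∀ x, g (L x) = c) (x a b : E) :
    fderiv 𝕜 (fderiv 𝕜 g) (L x) (L a) (L b) = 0 := by
  have hdg : Differentiable 𝕜 (fderiv 𝕜 g) :=
    (hg.fderiv_right (m := 1) le_rfl).differentiable one_ne_zero
  have hφ (y : E) : fderiv 𝕜 g (L y) (L b) = 0 :=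
    fderiv_apply_eq_zero_of_comp_eq_const (hg.differentiable two_ne_zero) hgL y b
  rw [← fderiv_clm_apply_const (hdg _)]
  exact fderiv_apply_eq_zero_of_comp_eq_const (hdg.clm_apply (differentiable_const _)) hφ x a

end SecondDerivative

/-- for `f` of class `C²`, `k ≥ 3`, `z_0 ∈ ℂ` and `m, l ∈ {1,2}`,
`Σ_{1 ≤ r_1, r_2 ≤ k} (∂_{r_1 m} ∂_{r_2 l} G_k)(z_0,…,z_0) = 0`. -/
theorem cumulantG_diag_second_deriv_full_sum (f : ℂ → ℝ) (hf : ContDiff ℝ 2 f)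
    (k : ℕ) (hk : 3 ≤ k) (z0 : ℂ) (m l : Fin 2) :
    ∑ r₁ : Fin k, ∑ r₂ : Fin k,
      fderiv ℝ (fun z => fderiv ℝ (cumulantG f k) z (coordDir k r₂ l))
        (fun _ => z0) (coordDir k r₁ m) = 0 := by
  have hG := contDiff_cumulantG hf k
  have hdG : Differentiable ℝ (fderiv ℝ (cumulantG f k)) :=
    (hG.fderiv_right (m := 1) le_rfl).differentiable one_ne_zero
  let diag : ℂ →L[ℝ] Fin k → ℂ := .pi fun _ ↦ .id ℝ ℂ
  simp only [fderiv_clm_apply_const (hdG _), ← sum_apply, ← map_sum, sum_coordDir]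
  exact fderiv_fderiv_apply_eq_zero_of_comp_eq_const (L := diag) hG
    (fun w ↦ cumulantG_const_eq_zero f (by omega) w) z0 _ _
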